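/- Let A ≥ 1 and let (x1,x2,x3,x4,x5,x6) be real numbers with x2, x4, x6 > 0 satisfying the system (E): x1 = 2·x2·x4 − (1/2)·(x2/x4 + x4/x2), x3 = 2·x4·x6 − (1/2)·(x4/x6 + x6/x4), x5 = 2·x2·x6 − (1/2)·(x2/x6 + x6/x2). If 1 ≤ x1, x3, x5 ≤ A, then (2(A+1) + √(2(A+1)))/(4A+2) ≤ x2, x4, x6 ≤ (A + √(A²+3))/3 ≤ A. -/
import Mathlib
set_option maxHeartbeats 1000000

/-- Convert an equation of the system plus bounds into polynomial inequalities. -/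
lemma pair_poly (A x a b : ℝ) (ha : 0 < a) (hb : 0 < b)
    (he : x = 2 * a * b - (1/2) * (a / b + b / a)) (hx : 1 ≤ x ∧ x ≤ A) :
    2*a*b ≤ 4*a^2*b^2 - a^2 - b^2 ∧ 4*a^2*b^2 - a^2 - b^2 ≤ 2*A*a*b := by
  have hab : 0 < a * b := mul_pos ha hb
  have key : 2*(a*b)*x = 4*a^2*b^2 - a^2 - b^2 := by
    rw [he]; field_simp; ring
  constructor
  · nlinarith [hx.1, hab]
  · nlinarith [hx.2, hab]

lemma core (A u v w : ℝ) (hA : 1 ≤ A) (hu : 0 < u) (hv : 0 < v) (hw : 0 < w)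
    (hwv : w ≤ v) (hvu : v ≤ u)
    (puv1 : 2*u*v ≤ 4*u^2*v^2 - u^2 - v^2) (puvA : 4*u^2*v^2 - u^2 - v^2 ≤ 2*A*u*v)
    (pvw1 : 2*v*w ≤ 4*v^2*w^2 - v^2 - w^2) :
    (2 * (A + 1) + Real.sqrt (2 * (A + 1))) / (4 * A + 2) ≤ w ∧
      u ≤ (A + Real.sqrt (A ^ 2 + 3)) / 3 := by
  -- From f(v,w) ≥ 1 we get v + w ≤ 2 v w
  have hvw_sum : v + w ≤ 2*v*w := by
    nlinarith [mul_pos hv hw, sq_nonneg (2*v*w - v - w), pvw1]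
  -- hence the larger of v, w is ≥ 1
  have hv1 : (1:ℝ) ≤ v := by nlinarith [hvw_sum, hw, hwv]
  -- upper bound: 3u² ≤ 2Au + 1
  have hfac : (0:ℝ) ≤ (v - 1) * (4*u^2*v + u^2 - v) := by
    have : (0:ℝ) ≤ 4*u^2*v + u^2 - v := by nlinarith [hv1, hvu, hu, hv]
    exact mul_nonneg (by linarith) this
  have hub : 3*u^2 ≤ 2*A*u + 1 := by
    nlinarith [hfac, puvA, hv, mul_pos hu hv]
  -- second-largest is ≤ sqrt((A+1)/2)
  have hBv : 2*v^2 ≤ A + 1 := by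
    have h1 : 2*A*u*v ≤ 2*A*u*u := by nlinarith [mul_nonneg (sub_nonneg.2 hvu) (mul_nonneg (by linarith : (0:ℝ) ≤ 2*A) hu.le)]
    have h2 : v^2 ≤ u^2 := by nlinarith
    have h3 : 4*u^2*v^2 ≤ (2*A+2)*u^2 := by nlinarith [puvA]
    nlinarith [h3, mul_pos hu hu]
  obtain ⟨s, hs⟩ : ∃ s, s = Real.sqrt (2*(A+1)) := ⟨_, rfl⟩
  rw [← hs]
  have hs2 : s^2 = 2*(A+1) := by rw [hs]; exact Real.sq_sqrt (by linarith)
  have hsn : 0 ≤ s := hs ▸ Real.sqrt_nonneg _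
  have hsge : 2 ≤ s := by nlinarith [hs2, hsn]
  have h2v : 2*v ≤ s := by nlinarith [hBv, hs2, hsn, hv]
  have step1 : v ≤ w*(2*v-1) := by nlinarith [hvw_sum]
  have step3 : s ≤ w*(2*s-2) := by
    have h1 : s*(2*v-1) ≤ v*(2*s-2) := by nlinarith [h2v, hv1, hsge]
    have h2 : v*(2*s-2) ≤ w*(2*v-1)*(2*s-2) := by
      have := mul_le_mul_of_nonneg_right step1 (show (0:ℝ) ≤ 2*s-2 by linarith)
      linarith
    have h3 : s*(2*v-1) ≤ w*(2*s-2)*(2*v-1) := by nlinarith [h1, h2]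
    have h4 : (0:ℝ) < 2*v-1 := by linarith
    exact le_of_mul_le_mul_right (by linarith [h3]) h4
  have hwlb : (2 * (A + 1) + s) / (4 * A + 2) ≤ w := by
    rw [div_le_iff₀ (by linarith)]
    -- 2(A+1) + s = s² + s = s(s+1) ≤ w(2s-2)(s+1) = w(2s²-2) = w(4A+2)
    nlinarith [mul_le_mul_of_nonneg_right step3 (show (0:ℝ) ≤ s + 1 by linarith), hs2]
  refine ⟨hwlb, ?_⟩
  have hr : Real.sqrt (A^2+3) ^ 2 = A^2+3 := Real.sq_sqrt (by positivity)
  have hrn : 0 ≤ Real.sqrt (A^2+3) := Real.sqrt_nonneg _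
  nlinarith [hub, hr, hrn, sq_nonneg (3*u - A - Real.sqrt (A^2+3)),
    sq_nonneg (3*u - A + Real.sqrt (A^2+3))]

/-- If (x1,...,x6) with x2,x4,x6 > 0 satisfies the system (E) and
1 ≤ x1, x3, x5 ≤ A with A ≥ 1, then
(2(A+1)+√(2(A+1)))/(4A+2) ≤ x2, x4, x6 ≤ (A+√(A²+3))/3 ≤ A. -/
theorem stmt_1 (A x1 x2 x3 x4 x5 x6 : ℝ) (hA : 1 ≤ A)
    (h2 : 0 < x2) (h4 : 0 < x4) (h6 : 0 < x6)
    (e1 : x1 = 2 * x2 * x4 - (1/2) * (x2 / x4 + x4 / x2))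
    (e3 : x3 = 2 * x4 * x6 - (1/2) * (x4 / x6 + x6 / x4))
    (e5 : x5 = 2 * x2 * x6 - (1/2) * (x2 / x6 + x6 / x2))
    (h1 : 1 ≤ x1 ∧ x1 ≤ A) (h3 : 1 ≤ x3 ∧ x3 ≤ A) (h5 : 1 ≤ x5 ∧ x5 ≤ A) :
    ((2 * (A + 1) + Real.sqrt (2 * (A + 1))) / (4 * A + 2) ≤ x2 ∧
     (2 * (A + 1) + Real.sqrt (2 * (A + 1))) / (4 * A + 2) ≤ x4 ∧
     (2 * (A + 1) + Real.sqrt (2 * (A + 1))) / (4 * A + 2) ≤ x6) ∧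
    (x2 ≤ (A + Real.sqrt (A ^ 2 + 3)) / 3 ∧
     x4 ≤ (A + Real.sqrt (A ^ 2 + 3)) / 3 ∧
     x6 ≤ (A + Real.sqrt (A ^ 2 + 3)) / 3) ∧
    (A + Real.sqrt (A ^ 2 + 3)) / 3 ≤ A := by
  have p24 := pair_poly A x1 x2 x4 h2 h4 e1 h1
  have p42 := pair_poly A x1 x4 x2 h4 h2 (by rw [e1]; ring) h1
  have p46 := pair_poly A x3 x4 x6 h4 h6 e3 h3
  have p64 := pair_poly A x3 x6 x4 h6 h4 (by rw [e3]; ring) h3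
  have p26 := pair_poly A x5 x2 x6 h2 h6 e5 h5
  have p62 := pair_poly A x5 x6 x2 h6 h2 (by rw [e5]; ring) h5
  have hUA : (A + Real.sqrt (A ^ 2 + 3)) / 3 ≤ A := by
    have hr : Real.sqrt (A^2+3) ^ 2 = A^2+3 := Real.sq_sqrt (by positivity)
    have hrn : 0 ≤ Real.sqrt (A^2+3) := Real.sqrt_nonneg _
    nlinarith [sq_nonneg (Real.sqrt (A^2+3) - 2*A), hA]
  obtain h24 | h42 := le_total x2 x4 <;> obtain h46 | h64 := le_total x4 x6 <;>
    obtain h26 | h62 := le_total x2 x6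
  -- x2 ≤ x4 ≤ x6
  · obtain ⟨hl, hu⟩ := core A x6 x4 x2 hA h6 h4 h2 h24 h46 p64.1 p64.2 p42.1
    exact ⟨⟨hl, by linarith, by linarith⟩, ⟨by linarith, by linarith, hu⟩, hUA⟩
  · obtain ⟨hl, hu⟩ := core A x6 x4 x2 hA h6 h4 h2 h24 h46 p64.1 p64.2 p42.1
    exact ⟨⟨hl, by linarith, by linarith⟩, ⟨by linarith, by linarith, hu⟩, hUA⟩
  -- x2 ≤ x6 ≤ x4
  · obtain ⟨hl, hu⟩ := core A x4 x6 x2 hA h4 h6 h2 h26 h64 p46.1 p46.2 p62.1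
    exact ⟨⟨hl, by linarith, by linarith⟩, ⟨by linarith, hu, by linarith⟩, hUA⟩
  -- x6 ≤ x2 ≤ x4
  · obtain ⟨hl, hu⟩ := core A x4 x2 x6 hA h4 h2 h6 h62 h24 p42.1 p42.2 p26.1
    exact ⟨⟨by linarith, by linarith, hl⟩, ⟨by linarith, hu, by linarith⟩, hUA⟩
  -- x4 ≤ x2 ≤ x6
  · obtain ⟨hl, hu⟩ := core A x6 x2 x4 hA h6 h2 h4 h42 h26 p62.1 p62.2 p24.1
    exact ⟨⟨by linarith, hl, by linarith⟩, ⟨by linarith, by linarith, hu⟩, hUA⟩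
  -- x4 ≤ x6 ≤ x2
  · obtain ⟨hl, hu⟩ := core A x2 x6 x4 hA h2 h6 h4 h46 h62 p26.1 p26.2 p64.1
    exact ⟨⟨by linarith, hl, by linarith⟩, ⟨hu, by linarith, by linarith⟩, hUA⟩
  -- x6 ≤ x4 ≤ x2
  · obtain ⟨hl, hu⟩ := core A x2 x4 x6 hA h2 h4 h6 h64 h42 p24.1 p24.2 p46.1
    exact ⟨⟨by linarith, by linarith, hl⟩, ⟨hu, by linarith, by linarith⟩, hUA⟩
  · obtain ⟨hl, hu⟩ := core A x2 x4 x6 hA h2 h4 h6 h64 h42 p24.1 p24.2 p46.1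
    exact ⟨⟨by linarith, by linarith, hl⟩, ⟨hu, by linarith, by linarith⟩, hUA⟩
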